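/- Let A be a residuated lattice, F a proper filter of A, and m an F-minimal prime filter of A. Then m = D_F(m) and m ⊆ D_F(F). -/

import Mathlib

/-!
If a prime filter `P ⊇ F` contained some `a ∉ D_F(P)`, the join-closed set `{x ∨ a | x ∉ P}`
would be disjoint from `F`. By the prime filter theorem (a filter maximal among those avoiding a
join-closed set is prime, because `(x ∨ y)^(m+n) ≤ x^m ∨ y^n`) some prime filter containing `F`
avoids that set; it is then contained in `P` but misses `a`, so `P` is not `F`-minimal. Hence
`m ⊆ D_F(m)` for an `F`-minimal prime `m`. The inclusion `D_F(m) ⊆ m` holds for every prime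
filter over `F`, and `D_F` is antitone in its second argument.
-/

class ResiduatedLattice (α : Type*) extends Lattice α, CommMonoid α, BoundedOrder α where
  rimp : α → α → α
  one_eq_top : (1 : α) = ⊤
  adjunction : ∀ x y z : α, x * y ≤ z ↔ x ≤ rimp y z

variable {α : Type*} [ResiduatedLattice α]

/-- A filter of a residuated lattice: nonempty, closed under `⊙` and upward closed. -/
def IsFilter (F : Set α) : Prop :=
  F.Nonempty ∧ (∀ x ∈ F, ∀ y ∈ F, x * y ∈ F) ∧ ∀ x ∈ F, ∀ y : α, x ≤ y → y ∈ F

/-- A prime filter: a proper filter such that `x ⊔ y ∈ P` implies `x ∈ P` or `y ∈ P`. -/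
def IsPrimeFilter (P : Set α) : Prop :=
  IsFilter P ∧ P ≠ Set.univ ∧ ∀ x y : α, x ⊔ y ∈ P → x ∈ P ∨ y ∈ P

/-- A `∨`-closed subset: nonempty and closed under join. -/
def IsJoinClosed (C : Set α) : Prop :=
  C.Nonempty ∧ ∀ x ∈ C, ∀ y ∈ C, x ⊔ y ∈ C

/-- The filter generated by a set. -/
def filterGen (X : Set α) : Set α := ⋂₀ {G : Set α | IsFilter G ∧ X ⊆ G}

/-- An `X`-minimal prime filter: prime, contains `X`, minimal among primes containing `X`. -/
def IsMinPrimeOver (X P : Set α) : Prop :=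
  IsPrimeFilter P ∧ X ⊆ P ∧ ∀ Q : Set α, IsPrimeFilter Q → X ⊆ Q → Q ⊆ P → Q = P

/-- `ω_F(X) = {a | x ∨ a ∈ F for some x ∈ X}`. -/
def omegaF (F X : Set α) : Set α := {a : α | ∃ x ∈ X, x ⊔ a ∈ F}

/-- The coannihilator `(F : x) = {a | x ∨ a ∈ F}`. -/
def coann (F : Set α) (x : α) : Set α := {a : α | x ⊔ a ∈ F}

/-- `D_F(H) = {a | x ∨ a ∈ F for some x ∉ H}`, the set of `F`-divisors of `H`. -/
def divisorsF (F H : Set α) : Set α := {a : α | ∃ x ∉ H, x ⊔ a ∈ F}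

/-- A lattice ideal: nonempty, closed under join and downward closed. -/
def IsLatticeIdeal (I : Set α) : Prop :=
  I.Nonempty ∧ (∀ x ∈ I, ∀ y ∈ I, x ⊔ y ∈ I) ∧ ∀ x y : α, x ≤ y → y ∈ I → x ∈ I

/-- The lattice ideal generated by a set. -/
def idealGen (X : Set α) : Set α := ⋂₀ {I : Set α | IsLatticeIdeal I ∧ X ⊆ I}

/-- An `ω_F`-filter: a filter of the form `ω_F(I)` for some lattice ideal `I`. -/
def IsOmegaFilter (F H : Set α) : Prop :=
  IsFilter H ∧ ∃ I : Set α, IsLatticeIdeal I ∧ H = omegaF F I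

namespace ResiduatedLattice

instance : IsOrderedMonoid α where
  mul_le_mul_left a b hab c :=
    (adjunction a c (b * c)).2 (hab.trans ((adjunction b c (b * c)).1 le_rfl))

lemma le_one (a : α) : a ≤ 1 := one_eq_top (α := α) ▸ le_top

lemma mul_le_right (a b : α) : a * b ≤ b := mul_le_of_le_one_left' (le_one a)

lemma mul_le_left (a b : α) : a * b ≤ a := mul_le_of_le_one_right' (le_one b)

lemma sup_mul_le (a b c : α) : (a ⊔ b) * c ≤ a * c ⊔ b * c :=
  (adjunction _ _ _).2 <|
    sup_le ((adjunction _ _ _).1 le_sup_left) ((adjunction _ _ _).1 le_sup_right)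

lemma mul_sup_le (a b c : α) : a * (b ⊔ c) ≤ a * b ⊔ a * c := by
  simpa only [mul_comm a] using sup_mul_le b c a

lemma sup_pow_add_le (x y : α) (m n : ℕ) : (x ⊔ y) ^ (m + n) ≤ x ^ m ⊔ y ^ n :=
  match m, n with
  | 0, _ => by rw [pow_zero]; exact (le_one _).trans le_sup_left
  | _ + 1, 0 => by rw [pow_zero]; exact (le_one _).trans le_sup_right
  | m + 1, n + 1 =>
    have hx : x * (x ⊔ y) ^ (m + 1 + n) ≤ x ^ (m + 1) ⊔ y ^ (n + 1) := by
      rw [Nat.add_right_comm]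
      exact (mul_le_mul_right (sup_pow_add_le x y m (n + 1)) x).trans <|
        (mul_sup_le _ _ _).trans <| sup_le_sup (pow_succ' x m).ge (mul_le_right _ _)
    have hy : y * (x ⊔ y) ^ (m + 1 + n) ≤ x ^ (m + 1) ⊔ y ^ (n + 1) :=
      (mul_le_mul_right (sup_pow_add_le x y (m + 1) n) y).trans <|
        (mul_sup_le _ _ _).trans <| sup_le_sup (mul_le_right _ _) (pow_succ' y n).ge
    calc (x ⊔ y) ^ (m + 1 + (n + 1)) = (x ⊔ y) * (x ⊔ y) ^ (m + 1 + n) := pow_succ' _ _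
      _ ≤ x * (x ⊔ y) ^ (m + 1 + n) ⊔ y * (x ⊔ y) ^ (m + 1 + n) := sup_mul_le _ _ _
      _ ≤ x ^ (m + 1) ⊔ y ^ (n + 1) := sup_le hx hy
termination_by m + n

end ResiduatedLattice

open ResiduatedLattice

namespace IsFilter

variable {G : Set α}

lemma mul_mem (hG : IsFilter G) {x y : α} (hx : x ∈ G) (hy : y ∈ G) : x * y ∈ G :=
  hG.2.1 x hx y hy

lemma mem_of_le (hG : IsFilter G) {x y : α} (hx : x ∈ G) (hxy : x ≤ y) : y ∈ G :=
  hG.2.2 x hx y hxy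

lemma one_mem (hG : IsFilter G) : (1 : α) ∈ G :=
  hG.1.elim fun _ hg => hG.mem_of_le hg (le_one _)

lemma pow_mem (hG : IsFilter G) {x : α} (hx : x ∈ G) (n : ℕ) : x ^ n ∈ G := by
  induction n with
  | zero => exact pow_zero x ▸ hG.one_mem
  | succ n ih => exact pow_succ x n ▸ hG.mul_mem ih hx

end IsFilter

def filterAdjoin (G : Set α) (x : α) : Set α := {y | ∃ g ∈ G, ∃ n : ℕ, g * x ^ n ≤ y}

lemma isFilter_filterAdjoin {G : Set α} (hG : IsFilter G) (x : α) :
    IsFilter (filterAdjoin G x) := by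
  refine ⟨hG.1.elim fun g hg => ⟨g, g, hg, 0, by rw [pow_zero, mul_one]⟩, ?_, ?_⟩
  · rintro a ⟨g, hg, n, hga⟩ b ⟨h, hh, k, hhb⟩
    refine ⟨g * h, hG.mul_mem hg hh, n + k, ?_⟩
    calc g * h * x ^ (n + k) = g * x ^ n * (h * x ^ k) := by rw [pow_add, mul_mul_mul_comm]
      _ ≤ a * b := mul_le_mul' hga hhb
  · rintro a ⟨g, hg, n, hga⟩ b hab
    exact ⟨g, hg, n, hga.trans hab⟩

lemma subset_filterAdjoin (G : Set α) (x : α) : G ⊆ filterAdjoin G x :=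
  fun g hg => ⟨g, hg, 0, by rw [pow_zero, mul_one]⟩

lemma mem_filterAdjoin_self {G : Set α} (hG : G.Nonempty) (x : α) : x ∈ filterAdjoin G x :=
  hG.elim fun g hg => ⟨g, hg, 1, by rw [pow_one]; exact mul_le_right g x⟩

lemma IsFilter.sup_mem_of_mem_filterAdjoin {P : Set α} (hP : IsFilter P) {x y c d : α}
    (hxy : x ⊔ y ∈ P) (hc : c ∈ filterAdjoin P x) (hd : d ∈ filterAdjoin P y) : c ⊔ d ∈ P := by
  obtain ⟨p, hp, n, hpc⟩ := hc
  obtain ⟨q, hq, k, hqd⟩ := hd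
  refine hP.mem_of_le (hP.mul_mem (hP.mul_mem hp hq) (hP.pow_mem hxy (n + k))) ?_
  calc p * q * (x ⊔ y) ^ (n + k) ≤ p * q * (x ^ n ⊔ y ^ k) :=
        mul_le_mul_right (sup_pow_add_le x y n k) _
    _ ≤ p * q * x ^ n ⊔ p * q * y ^ k := mul_sup_le _ _ _
    _ ≤ c ⊔ d := by
        refine sup_le_sup ((?_ : _ ≤ p * x ^ n).trans hpc) ((?_ : _ ≤ q * y ^ k).trans hqd)
        · rw [mul_right_comm]; exact mul_le_left _ _
        · rw [mul_assoc]; exact mul_le_right _ _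

lemma isFilter_sUnion_of_isChain {c : Set (Set α)} (hc : ∀ G ∈ c, IsFilter G)
    (hchain : IsChain (· ⊆ ·) c) (hne : c.Nonempty) : IsFilter (⋃₀ c) := by
  refine ⟨?_, ?_, ?_⟩
  · obtain ⟨G, hG⟩ := hne
    exact (hc G hG).1.mono (Set.subset_sUnion_of_mem hG)
  · rintro a ⟨G, hG, ha⟩ b ⟨H, hH, hb⟩
    rcases hchain.total hG hH with hGH | hHG
    · exact ⟨H, hH, (hc H hH).mul_mem (hGH ha) hb⟩
    · exact ⟨G, hG, (hc G hG).mul_mem ha (hHG hb)⟩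
  · rintro a ⟨G, hG, ha⟩ b hab
    exact ⟨G, hG, (hc G hG).mem_of_le ha hab⟩

theorem exists_isPrimeFilter_superset_disjoint {F C : Set α} (hF : IsFilter F)
    (hC : IsJoinClosed C) (hFC : Disjoint F C) :
    ∃ P, IsPrimeFilter P ∧ F ⊆ P ∧ Disjoint P C := by
  let S : Set (Set α) := {G | IsFilter G ∧ F ⊆ G ∧ Disjoint G C}
  obtain ⟨P, hFP, hmax⟩ := zorn_subset_nonempty S (fun c hcS hchain hne =>
    ⟨⋃₀ c, ⟨isFilter_sUnion_of_isChain (fun G hG => (hcS hG).1) hchain hne,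
        hne.elim fun G hG => (hcS hG).2.1.trans (Set.subset_sUnion_of_mem hG),
        Set.disjoint_sUnion_left.2 fun G hG => (hcS hG).2.2⟩,
      fun _ => Set.subset_sUnion_of_mem⟩) F ⟨hF, le_rfl, hFC⟩
  obtain ⟨hP, -, hPC⟩ := hmax.prop
  have meets : ∀ x ∉ P, ∃ c ∈ C, c ∈ filterAdjoin P x := by
    intro x hx
    by_contra! h
    have hS : filterAdjoin P x ∈ S :=
      ⟨isFilter_filterAdjoin hP x, hFP.trans (subset_filterAdjoin P x),
        Set.disjoint_right.2 h⟩
    exact hx (hmax.eq_of_subset hS (subset_filterAdjoin P x) ▸ mem_filterAdjoin_self hP.1 x)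
  refine ⟨P, ⟨hP, ?_, ?_⟩, hFP, hPC⟩
  · obtain ⟨c, hc⟩ := hC.1
    exact fun hPuniv => Set.disjoint_left.1 hPC (hPuniv ▸ Set.mem_univ c) hc
  · intro x y hxy
    by_contra! hxyP
    obtain ⟨c, hcC, hc⟩ := meets x hxyP.1
    obtain ⟨d, hdC, hd⟩ := meets y hxyP.2
    exact Set.disjoint_left.1 hPC (hP.sup_mem_of_mem_filterAdjoin hxy hc hd) (hC.2 c hcC d hdC)

lemma IsPrimeFilter.isJoinClosed_compl {P : Set α} (hP : IsPrimeFilter P) :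
    IsJoinClosed Pᶜ :=
  ⟨Set.nonempty_compl.2 hP.2.1, fun x hx y hy hxy => (hP.2.2 x y hxy).elim hx hy⟩

lemma IsJoinClosed.image_sup_right {C : Set α} (hC : IsJoinClosed C) (a : α) :
    IsJoinClosed ((· ⊔ a) '' C) := by
  refine ⟨hC.1.image _, ?_⟩
  rintro _ ⟨x, hx, rfl⟩ _ ⟨y, hy, rfl⟩
  exact ⟨x ⊔ y, hC.2 x hx y hy, by rw [sup_sup_sup_comm, sup_idem]⟩

lemma divisorsF_subset {F P : Set α} (hP : IsPrimeFilter P) (hFP : F ⊆ P) :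
    divisorsF F P ⊆ P := fun _ ⟨_, hx, hxa⟩ => (hP.2.2 _ _ (hFP hxa)).resolve_left hx

lemma divisorsF_anti {F H K : Set α} (hHK : H ⊆ K) : divisorsF F K ⊆ divisorsF F H :=
  fun _ ⟨x, hx, hxa⟩ => ⟨x, fun hxH => hx (hHK hxH), hxa⟩

lemma IsMinPrimeOver.subset_divisorsF {F m : Set α} (hF : IsFilter F)
    (hm : IsMinPrimeOver F m) : m ⊆ divisorsF F m := by
  obtain ⟨hmP, hFm, hmin⟩ := hm
  intro a ha
  by_contra hna
  have hFC : Disjoint F ((· ⊔ a) '' mᶜ) := by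
    refine Set.disjoint_right.2 ?_
    rintro _ ⟨x, hx, rfl⟩ hxa
    exact hna ⟨x, hx, hxa⟩
  obtain ⟨P, hP, hFP, hPC⟩ := exists_isPrimeFilter_superset_disjoint hF
    (hmP.isJoinClosed_compl.image_sup_right a) hFC
  have hPm : P ⊆ m := fun q hq => by
    by_contra hqm
    exact Set.disjoint_left.1 hPC (hP.1.mem_of_le hq le_sup_left) ⟨q, hqm, rfl⟩
  obtain ⟨x, hx⟩ := hmP.isJoinClosed_compl.1
  have haP : a ∈ P := hmin P hP hFP hPm ▸ ha
  exact Set.disjoint_left.1 hPC (hP.1.mem_of_le haP le_sup_right) ⟨x, hx, rfl⟩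

theorem stmt_8_general (F m : Set α) (hF : IsFilter F)
    (hm : IsMinPrimeOver F m) :
    m = divisorsF F m ∧ m ⊆ divisorsF F F :=
  have hsub := hm.subset_divisorsF hF
  ⟨hsub.antisymm (divisorsF_subset hm.1 hm.2.1), hsub.trans (divisorsF_anti hm.2.1)⟩

/-- Proposition 3.13: for a proper filter `F` and an `F`-minimal prime
filter `m`, `m = D_F(m)` and `m ⊆ D_F(F)`. -/
theorem stmt_8 (F m : Set α) (hF : IsFilter F) (hFp : F ≠ Set.univ)
    (hm : IsMinPrimeOver F m) :
    m = divisorsF F m ∧ m ⊆ divisorsF F F :=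
  stmt_8_general F m hF hm
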